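/- For fixed P₁, P₂ > 0 and R_c, R_s ∈ ℝ with 0 < R_c² + R_s² < P₁P₂, the function h(σ₁,σ₂,ρ,φ) = −2 ln(σ₁²σ₂²(1−ρ²)) − (1/(1−ρ²))(P₁/σ₁² + P₂/σ₂² − 2ρ(R_c cos φ + R_s sin φ)/(σ₁σ₂)), defined for σ₁ > 0, σ₂ > 0, 0 ≤ ρ < 1, φ ∈ ℝ, attains its maximum at σ₁ = √(P₁/2), σ₂ = √(P₂/2), ρ = √((R_c²+R_s²)/(P₁P₂)), cos φ = R_c/√(R_c²+R_s²), sin φ = R_s/√(R_c²+R_s²). -/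

import Mathlib

/-!
Write `S = √(P₁P₂)`, `R = √(Rc² + Rs²)`, `u = σ₁σ₂`, `e = 1 - ρ²`. Cauchy–Schwarz gives
`Rc cos φ + Rs sin φ ≤ R` and AM–GM gives `P₁/σ₁² + P₂/σ₂² ≥ 2S/u`, so
`h ≤ -2 log (u²e) - 2A/(ue)` with `A = S - ρR > 0`. Since `log x ≤ x - 1`, the right-hand side
is at most `-2 log (A²/(4e)) - 4`, and `e (S² - R²) ≤ A²` (the gap is `(R - ρS)²`) bounds this by
`-2 log ((P₁P₂ - Rc² - Rs²)/4) - 4`, which is the value of `h` at the claimed maximiser.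
-/

open Real

noncomputable def hML (P₁ P₂ Rc Rs σ₁ σ₂ ρ φ : ℝ) : ℝ :=
  -2 * Real.log (σ₁^2 * σ₂^2 * (1 - ρ^2))
    - (1/(1 - ρ^2)) * (P₁/σ₁^2 + P₂/σ₂^2
        - 2*ρ*(Rc*Real.cos φ + Rs*Real.sin φ)/(σ₁*σ₂))

lemma mul_cos_add_mul_sin_le_sqrt (a b φ : ℝ) : a * cos φ + b * sin φ ≤ √(a ^ 2 + b ^ 2) :=
  le_trans (le_abs_self _) <| Real.abs_le_sqrt <| by
    nlinarith [sq_nonneg (a * sin φ - b * cos φ), sin_sq_add_cos_sq φ]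

lemma two_mul_sqrt_mul_div_le {a b : ℝ} (ha : 0 ≤ a) (hb : 0 ≤ b) (x y : ℝ) :
    2 * √(a * b) / (x * y) ≤ a / x ^ 2 + b / y ^ 2 := by
  have h := two_mul_le_add_sq (√a / x) (√b / y)
  rw [div_pow, div_pow, sq_sqrt ha, sq_sqrt hb] at h
  rw [sqrt_mul ha]
  exact le_of_eq_of_le (by ring) h

lemma one_sub_sq_mul_sq_sub_sq_le (ρ R S : ℝ) : (1 - ρ ^ 2) * (S ^ 2 - R ^ 2) ≤ (S - ρ * R) ^ 2 := by
  nlinarith [sq_nonneg (R - ρ * S)]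

lemma neg_two_mul_log_sub_div_le {A e u : ℝ} (hA : 0 < A) (he : 0 < e) (hu : 0 < u) :
    -2 * log (u ^ 2 * e) - 2 * A / (u * e) ≤ -2 * log (A ^ 2 / (4 * e)) - 4 := by
  set x := A / (2 * u * e)
  have hx : 0 < x := by positivity
  have hlog := log_le_sub_one_of_pos hx
  have hsplit : A ^ 2 / (4 * e) = u ^ 2 * e * x ^ 2 := by
    simp only [x]; field_simp; ring
  have hdiv : 2 * A / (u * e) = 4 * x := by
    simp only [x]; field_simp; ring
  rw [hsplit, hdiv, log_mul (x := u ^ 2 * e) (by positivity) (by positivity), log_pow]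
  push_cast
  linarith

lemma hML_le {P₁ P₂ σ₁ σ₂ ρ : ℝ} (hP₁ : 0 ≤ P₁) (hP₂ : 0 ≤ P₂) (hσ₁ : 0 ≤ σ₁) (hσ₂ : 0 ≤ σ₂)
    (hρ0 : 0 ≤ ρ) (hρ1 : ρ ≤ 1) (Rc Rs φ : ℝ) :
    hML P₁ P₂ Rc Rs σ₁ σ₂ ρ φ ≤ -2 * log (σ₁ ^ 2 * σ₂ ^ 2 * (1 - ρ ^ 2))
      - 2 * (√(P₁ * P₂) - ρ * √(Rc ^ 2 + Rs ^ 2)) / (σ₁ * σ₂ * (1 - ρ ^ 2)) := by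
  have he : 0 ≤ 1 - ρ ^ 2 := by nlinarith
  have hCS : ρ * (Rc * cos φ + Rs * sin φ) / (σ₁ * σ₂) ≤ ρ * √(Rc ^ 2 + Rs ^ 2) / (σ₁ * σ₂) := by
    gcongr
    exact mul_cos_add_mul_sin_le_sqrt Rc Rs φ
  have hAMGM := two_mul_sqrt_mul_div_le hP₁ hP₂ σ₁ σ₂
  unfold hML
  rw [show ∀ A u e : ℝ, 2 * A / (u * e) = 1 / e * (2 * A / u) by intros; ring]
  gcongr
  linear_combination hAMGM + 2 * hCS

lemma hML_at_maximiser {P₁ P₂ Rc Rs φ₀ : ℝ} (hP₁ : 0 < P₁) (hP₂ : 0 < P₂)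
    (hRP : Rc ^ 2 + Rs ^ 2 < P₁ * P₂)
    (hcos : cos φ₀ = Rc / √(Rc ^ 2 + Rs ^ 2)) (hsin : sin φ₀ = Rs / √(Rc ^ 2 + Rs ^ 2)) :
    hML P₁ P₂ Rc Rs √(P₁ / 2) √(P₂ / 2) √((Rc ^ 2 + Rs ^ 2) / (P₁ * P₂)) φ₀
      = -2 * log ((P₁ * P₂ - (Rc ^ 2 + Rs ^ 2)) / 4) - 4 := by
  set a := √(P₁ / 2)
  set b := √(P₂ / 2)
  set ρ := √((Rc ^ 2 + Rs ^ 2) / (P₁ * P₂))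
  have ha : a ^ 2 = P₁ / 2 := sq_sqrt (by positivity)
  have hb : b ^ 2 = P₂ / 2 := sq_sqrt (by positivity)
  have hρ : ρ ^ 2 = (Rc ^ 2 + Rs ^ 2) / (P₁ * P₂) := sq_sqrt (by positivity)
  have ha0 : 0 < a := sqrt_pos.2 (by positivity)
  have hb0 : 0 < b := sqrt_pos.2 (by positivity)
  have he : 1 - ρ ^ 2 ≠ 0 := by
    rw [hρ]; have := (div_lt_one (by positivity)).2 hRP; linarith
  have hsqrt : √(Rc ^ 2 + Rs ^ 2) = 2 * ρ * a * b := by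
    rw [← sqrt_sq (by positivity : 0 ≤ 2 * ρ * a * b)]
    congr 1
    rw [mul_pow, mul_pow, mul_pow, ha, hb, hρ]
    field_simp
  have hM : Rc * cos φ₀ + Rs * sin φ₀ = 2 * ρ * a * b := by
    rw [hcos, hsin, mul_div_assoc', mul_div_assoc', ← add_div, ← sq, ← sq, div_sqrt,
      hsqrt]
  unfold hML
  rw [hM, ha, hb]
  have harg : P₁ / 2 * (P₂ / 2) * (1 - ρ ^ 2) = (P₁ * P₂ - (Rc ^ 2 + Rs ^ 2)) / 4 := by
    rw [hρ]; field_simp; ring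
  have hquot : 1 / (1 - ρ ^ 2) * (P₁ / (P₁ / 2) + P₂ / (P₂ / 2) - 2 * ρ * (2 * ρ * a * b) / (a * b))
      = 4 := by
    field_simp; ring
  rw [harg, hquot]

theorem hML_max_general (P₁ P₂ Rc Rs : ℝ) (hP₁ : 0 < P₁) (hP₂ : 0 < P₂)
    (hRP : Rc^2 + Rs^2 < P₁*P₂) :
    ∀ φ₀ : ℝ, Real.cos φ₀ = Rc / Real.sqrt (Rc^2 + Rs^2) →
      Real.sin φ₀ = Rs / Real.sqrt (Rc^2 + Rs^2) →
      ∀ σ₁ σ₂ ρ φ : ℝ, 0 < σ₁ → 0 < σ₂ → 0 ≤ ρ → ρ < 1 →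
        hML P₁ P₂ Rc Rs σ₁ σ₂ ρ φ ≤
          hML P₁ P₂ Rc Rs (Real.sqrt (P₁/2)) (Real.sqrt (P₂/2))
            (Real.sqrt ((Rc^2 + Rs^2)/(P₁*P₂))) φ₀ := by
  intro φ₀ hcos hsin σ₁ σ₂ ρ φ hσ₁ hσ₂ hρ0 hρ1
  set S := √(P₁ * P₂)
  set R := √(Rc ^ 2 + Rs ^ 2)
  have he : 0 < 1 - ρ ^ 2 := by nlinarith
  have hA : 0 < S - ρ * R := by
    have hRS : R < S := sqrt_lt_sqrt (by positivity) hRP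
    nlinarith [sqrt_nonneg (Rc ^ 2 + Rs ^ 2)]
  have hgap : (P₁ * P₂ - (Rc ^ 2 + Rs ^ 2)) / 4 ≤ (S - ρ * R) ^ 2 / (4 * (1 - ρ ^ 2)) := by
    have h := one_sub_sq_mul_sq_sub_sq_le ρ R S
    rw [sq_sqrt (by positivity), sq_sqrt (by positivity)] at h
    rw [div_le_div_iff₀ (by norm_num) (by positivity)]
    linarith
  rw [hML_at_maximiser hP₁ hP₂ hRP hcos hsin]
  calc hML P₁ P₂ Rc Rs σ₁ σ₂ ρ φ
      ≤ -2 * log (σ₁ ^ 2 * σ₂ ^ 2 * (1 - ρ ^ 2)) - 2 * (S - ρ * R) / (σ₁ * σ₂ * (1 - ρ ^ 2)) :=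
        hML_le hP₁.le hP₂.le hσ₁.le hσ₂.le hρ0 hρ1.le Rc Rs φ
    _ ≤ -2 * log ((S - ρ * R) ^ 2 / (4 * (1 - ρ ^ 2))) - 4 := by
        rw [← mul_pow]
        exact neg_two_mul_log_sub_div_le hA he (mul_pos hσ₁ hσ₂)
    _ ≤ -2 * log ((P₁ * P₂ - (Rc ^ 2 + Rs ^ 2)) / 4) - 4 := by
        have := log_le_log (by linarith) hgap
        linarith

theorem hML_max (P₁ P₂ Rc Rs : ℝ) (hP₁ : 0 < P₁) (hP₂ : 0 < P₂)
    (hR : 0 < Rc^2 + Rs^2) (hRP : Rc^2 + Rs^2 < P₁*P₂) :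
    ∀ φ₀ : ℝ, Real.cos φ₀ = Rc / Real.sqrt (Rc^2 + Rs^2) →
      Real.sin φ₀ = Rs / Real.sqrt (Rc^2 + Rs^2) →
      ∀ σ₁ σ₂ ρ φ : ℝ, 0 < σ₁ → 0 < σ₂ → 0 ≤ ρ → ρ < 1 →
        hML P₁ P₂ Rc Rs σ₁ σ₂ ρ φ ≤
          hML P₁ P₂ Rc Rs (Real.sqrt (P₁/2)) (Real.sqrt (P₂/2))
            (Real.sqrt ((Rc^2 + Rs^2)/(P₁*P₂))) φ₀ :=
  hML_max_general P₁ P₂ Rc Rs hP₁ hP₂ hRP
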